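/- Let p be a prime. If G₇, G₈, G₉ are groups belonging to families 𝒢₇, 𝒢₈, 𝒢₉ respectively, then no two of them are isomorphic: G₇ ≇ G₈, G₇ ≇ G₉, and G₈ ≇ G₉. -/

import Mathlib

/-- Membership in family 𝒢₇: `G = ⟨x, y, t₁, t₂, t₃⟩`, `Z(G) = ⟨t₁⟩ × ⟨t₂⟩ × ⟨t₃⟩`,
`o(tᵢ) = p^{mᵢ}`, `x^p = t₂`, `y^p = t₃`, `[x,y] = t₁^{p^{m₁-1}}`. -/
def InFamilyG7 (p m₁ m₂ m₃ : ℕ) (G : Type*) [Group G] : Prop :=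
  ∃ x y t₁ t₂ t₃ : G,
    Subgroup.closure {x, y, t₁, t₂, t₃} = ⊤ ∧
    Subgroup.center G = Subgroup.closure {t₁, t₂, t₃} ∧
    Subgroup.zpowers t₁ ⊓ Subgroup.closure {t₂, t₃} = ⊥ ∧
    Subgroup.zpowers t₂ ⊓ Subgroup.closure {t₁, t₃} = ⊥ ∧
    Subgroup.zpowers t₃ ⊓ Subgroup.closure {t₁, t₂} = ⊥ ∧
    orderOf t₁ = p ^ m₁ ∧ orderOf t₂ = p ^ m₂ ∧ orderOf t₃ = p ^ m₃ ∧
    x ^ p = t₂ ∧ y ^ p = t₃ ∧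
    x⁻¹ * y⁻¹ * x * y = t₁ ^ p ^ (m₁ - 1)

/-- Membership in family 𝒢₈: `G = ⟨x, y, t₁, t₂, u₁⟩`, `Z(G) = ⟨t₁⟩ × ⟨t₂⟩ × ⟨u₁⟩`,
`o(t₁) = p^{m₁}`, `o(t₂) = p^{m₂}`, `o(u₁) = ∞`, `x^p = t₂`, `y^p = u₁`,
`[x,y] = t₁^{p^{m₁-1}}`. -/
def InFamilyG8 (p m₁ m₂ : ℕ) (G : Type*) [Group G] : Prop :=
  ∃ x y t₁ t₂ u₁ : G,
    Subgroup.closure {x, y, t₁, t₂, u₁} = ⊤ ∧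
    Subgroup.center G = Subgroup.closure {t₁, t₂, u₁} ∧
    Subgroup.zpowers t₁ ⊓ Subgroup.closure {t₂, u₁} = ⊥ ∧
    Subgroup.zpowers t₂ ⊓ Subgroup.closure {t₁, u₁} = ⊥ ∧
    Subgroup.zpowers u₁ ⊓ Subgroup.closure {t₁, t₂} = ⊥ ∧
    orderOf t₁ = p ^ m₁ ∧ orderOf t₂ = p ^ m₂ ∧ ¬ IsOfFinOrder u₁ ∧
    x ^ p = t₂ ∧ y ^ p = u₁ ∧
    x⁻¹ * y⁻¹ * x * y = t₁ ^ p ^ (m₁ - 1)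

/-- Membership in family 𝒢₉: `G = ⟨x, y, t₁, u₁, u₂⟩`, `Z(G) = ⟨t₁⟩ × ⟨u₁⟩ × ⟨u₂⟩`,
`o(t₁) = p^{m₁}`, `o(u₁) = o(u₂) = ∞`, `x^p = u₁`, `y^p = u₂`,
`[x,y] = t₁^{p^{m₁-1}}`. -/
def InFamilyG9 (p m₁ : ℕ) (G : Type*) [Group G] : Prop :=
  ∃ x y t₁ u₁ u₂ : G,
    Subgroup.closure {x, y, t₁, u₁, u₂} = ⊤ ∧
    Subgroup.center G = Subgroup.closure {t₁, u₁, u₂} ∧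
    Subgroup.zpowers t₁ ⊓ Subgroup.closure {u₁, u₂} = ⊥ ∧
    Subgroup.zpowers u₁ ⊓ Subgroup.closure {t₁, u₂} = ⊥ ∧
    Subgroup.zpowers u₂ ⊓ Subgroup.closure {t₁, u₁} = ⊥ ∧
    orderOf t₁ = p ^ m₁ ∧ ¬ IsOfFinOrder u₁ ∧ ¬ IsOfFinOrder u₂ ∧
    x ^ p = u₁ ∧ y ^ p = u₂ ∧
    x⁻¹ * y⁻¹ * x * y = t₁ ^ p ^ (m₁ - 1)

/-! The families are told apart by the torsion-free rank of the centre. `Z(G₇)` is generated by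
elements of finite order, so it is a torsion group. `Z(G₈)` contains `u₁` of infinite order, but
every central element is torsion modulo a power of `u₁`; if `a u₁^e` and `b u₁^f` are torsion then
so is `a^f b^(-e)`, so no two central elements are independent modulo torsion. In `Z(G₉)` the
elements `u₁`, `u₂` are independent modulo torsion since `⟨u₁⟩ ∩ ⟨u₂⟩ = 1`. Both properties of the
centre are invariant under isomorphism. -/

open Subgroup

def HasIndependentPair (H : Type*) [Group H] : Prop :=
  ∃ a b : H, ∀ i j : ℤ, IsOfFinOrder (a ^ i * b ^ j) → i = 0 ∧ j = 0

section

variable {H K : Type*} [Group H] [Group K]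

lemma HasIndependentPair.of_injective {f : H →* K} (hf : Function.Injective f)
    (h : HasIndependentPair H) : HasIndependentPair K := by
  obtain ⟨a, b, hab⟩ := h
  refine ⟨f a, f b, fun i j hij => hab i j ?_⟩
  rwa [← map_zpow, ← map_zpow, ← map_mul, hf.isOfFinOrder_iff] at hij

lemma HasIndependentPair.not_isMulTorsion : HasIndependentPair H → ¬IsMulTorsion H :=
  fun ⟨a, _, hab⟩ hH => one_ne_zero (hab 1 0 (by simpa using hH a)).1

end

lemma not_hasIndependentPair_of_forall_isOfFinOrder_mul_zpow {C : Type*} [CommGroup C] (u : C)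
    (h : ∀ g : C, ∃ e : ℤ, IsOfFinOrder (g * u ^ e)) : ¬HasIndependentPair C := by
  rintro ⟨a, b, hab⟩
  obtain ⟨e, he⟩ := h a
  obtain ⟨f, hf⟩ := h b
  have hcancel : (a * u ^ e) ^ f * (b * u ^ f) ^ (-e) = a ^ f * b ^ (-e) := by
    simp only [mul_zpow, ← zpow_mul]
    rw [mul_mul_mul_comm, ← zpow_add, mul_neg, mul_comm e f, add_neg_cancel, zpow_zero, mul_one]
  obtain ⟨rfl, he₀⟩ := hab f (-e) (hcancel ▸ he.zpow.mul hf.zpow)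
  obtain rfl : e = 0 := neg_eq_zero.mp he₀
  exact one_ne_zero (hab 1 0 (by simpa using he)).1

section

variable {G : Type*} [Group G]

lemma Subgroup.normal_of_le_center {H : Subgroup G} (hH : H ≤ center G) : H.Normal :=
  ⟨fun n hn g => by rw [mem_center_iff.mp (hH hn) g, mul_inv_cancel_right]; exact hn⟩

lemma isOfFinOrder_of_orderOf_eq_pow {p m : ℕ} (hp : 0 < p) {g : G} (h : orderOf g = p ^ m) :
    IsOfFinOrder g :=
  orderOf_pos_iff.mp (h ▸ pow_pos hp m)

lemma isOfFinOrder_of_mem_closure {S : Set G} (hS : S ⊆ center G)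
    (hS_fin : ∀ s ∈ S, IsOfFinOrder s) {g : G} (hg : g ∈ closure S) : IsOfFinOrder g := by
  induction hg using closure_induction with
  | mem s hs => exact hS_fin s hs
  | one => exact .one
  | mul x y hx _ hx_fin hy_fin =>
    have hxy : Commute x y := (mem_center_iff.mp ((closure_le _).mpr hS hx) y).symm
    exact hxy.isOfFinOrder_mul hx_fin hy_fin
  | inv x _ hx_fin => exact hx_fin.inv

lemma isMulTorsion_center_of_eq_closure {S : Set G} (hZ : center G = closure S)
    (hS_fin : ∀ s ∈ S, IsOfFinOrder s) : IsMulTorsion (center G) := fun g =>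
  (center G).subtype_injective.isOfFinOrder_iff.mp <|
    isOfFinOrder_of_mem_closure (fun _ hs => hZ.ge (subset_closure hs)) hS_fin (hZ.le g.2)

lemma exists_isOfFinOrder_mul_zpow_of_mem_sup {S : Set G} (hS : S ⊆ center G)
    (hS_fin : ∀ s ∈ S, IsOfFinOrder s) {u : G} (hu : u ∈ center G) {g : G}
    (hg : g ∈ closure S ⊔ zpowers u) : ∃ e : ℤ, IsOfFinOrder (g * u ^ e) := by
  have := normal_of_le_center (zpowers_le.mpr hu)
  obtain ⟨s, hs, _, ⟨e, rfl⟩, rfl⟩ := mem_sup_of_normal_right.mp hg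
  exact ⟨-e, by simpa [mul_assoc] using isOfFinOrder_of_mem_closure hS hS_fin hs⟩

lemma Commute.eq_zero_of_isOfFinOrder_zpow_mul_zpow {a b : G}
    (hab : Commute a b) (hdisj : zpowers a ⊓ zpowers b = ⊥) (ha : ¬IsOfFinOrder a)
    (hb : ¬IsOfFinOrder b) {i j : ℤ} (h : IsOfFinOrder (a ^ i * b ^ j)) : i = 0 ∧ j = 0 := by
  obtain ⟨n, hn, hpow⟩ := h.exists_pow_eq_one
  have hprod : a ^ (i * n) * b ^ (j * n) = 1 := by
    rw [zpow_mul, zpow_mul, zpow_natCast, zpow_natCast, ← (hab.zpow_zpow i j).mul_pow, hpow]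
  have ha₁ : a ^ (i * n) = 1 := by
    have hmem : a ^ (i * n) ∈ zpowers a ⊓ zpowers b := by
      refine mem_inf.mpr ⟨zpow_mem_zpowers a _, ?_⟩
      rw [eq_inv_of_mul_eq_one_left hprod]
      exact inv_mem (zpow_mem_zpowers b _)
    rwa [hdisj, mem_bot] at hmem
  have hb₁ : b ^ (j * n) = 1 := by rwa [ha₁, one_mul] at hprod
  have hn₀ : (n : ℤ) ≠ 0 := by exact_mod_cast hn.ne'
  have eq_zero {x : G} (hx : ¬IsOfFinOrder x) {k : ℤ} (hk : x ^ (k * n) = 1) : k = 0 := by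
    by_contra hk₀
    exact hx (isOfFinOrder_iff_zpow_eq_one.mpr ⟨k * n, mul_ne_zero hk₀ hn₀, hk⟩)
  exact ⟨eq_zero ha ha₁, eq_zero hb hb₁⟩

open scoped IsMulCommutative in
lemma not_hasIndependentPair_center_of_eq_sup {S : Set G} {u : G}
    (hZ : center G = closure S ⊔ zpowers u) (hS_fin : ∀ s ∈ S, IsOfFinOrder s) :
    ¬HasIndependentPair (center G) := by
  have hS : S ⊆ center G := fun _ hs => hZ.ge (mem_sup_left (subset_closure hs))
  have hu : u ∈ center G := hZ.ge (mem_sup_right (mem_zpowers u))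
  refine not_hasIndependentPair_of_forall_isOfFinOrder_mul_zpow (⟨u, hu⟩ : center G) fun g => ?_
  obtain ⟨e, he⟩ := exists_isOfFinOrder_mul_zpow_of_mem_sup hS hS_fin hu (hZ.le g.2)
  exact ⟨e, (center G).subtype_injective.isOfFinOrder_iff.mp (by simpa using he)⟩

lemma hasIndependentPair_center_of_mem {a b : G} (ha : a ∈ center G) (hb : b ∈ center G)
    (hab : ∀ i j : ℤ, IsOfFinOrder (a ^ i * b ^ j) → i = 0 ∧ j = 0) :
    HasIndependentPair (center G) :=
  ⟨⟨a, ha⟩, ⟨b, hb⟩, fun i j h =>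
    hab i j (by simpa using (center G).subtype_injective.isOfFinOrder_iff.mpr h)⟩

lemma InFamilyG7.isMulTorsion_center {p m₁ m₂ m₃ : ℕ} (hp : 0 < p)
    (h : InFamilyG7 p m₁ m₂ m₃ G) : IsMulTorsion (center G) := by
  obtain ⟨_, _, t₁, t₂, t₃, -, hZ, -, -, -, ht₁, ht₂, ht₃, -⟩ := h
  refine isMulTorsion_center_of_eq_closure hZ ?_
  simpa using ⟨isOfFinOrder_of_orderOf_eq_pow hp ht₁, isOfFinOrder_of_orderOf_eq_pow hp ht₂,
    isOfFinOrder_of_orderOf_eq_pow hp ht₃⟩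

lemma InFamilyG8.not_isMulTorsion_center {p m₁ m₂ : ℕ} (h : InFamilyG8 p m₁ m₂ G) :
    ¬IsMulTorsion (center G) := by
  obtain ⟨_, _, _, _, u, -, hZ, -, -, -, -, -, hu, -⟩ := h
  exact fun hG => hu <| (center G).subtype_injective.isOfFinOrder_iff.mpr
    (hG ⟨u, hZ.ge (subset_closure (by simp))⟩)

lemma InFamilyG8.not_hasIndependentPair_center {p m₁ m₂ : ℕ} (hp : 0 < p)
    (h : InFamilyG8 p m₁ m₂ G) : ¬HasIndependentPair (center G) := by
  obtain ⟨_, _, t₁, t₂, u, -, hZ, -, -, -, ht₁, ht₂, -⟩ := h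
  refine not_hasIndependentPair_center_of_eq_sup (S := {t₁, t₂}) (u := u) ?_ ?_
  · rw [hZ, zpowers_eq_closure, ← Subgroup.closure_union, Set.insert_union, Set.singleton_union]
  · simpa using ⟨isOfFinOrder_of_orderOf_eq_pow hp ht₁, isOfFinOrder_of_orderOf_eq_pow hp ht₂⟩

lemma InFamilyG9.hasIndependentPair_center {p m₁ : ℕ} (h : InFamilyG9 p m₁ G) :
    HasIndependentPair (center G) := by
  obtain ⟨_, _, _, u₁, u₂, -, hZ, -, hdisj, -, -, hu₁, hu₂, -⟩ := h
  have hu₁_mem : u₁ ∈ center G := hZ.ge (subset_closure (by simp))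
  have hu₂_mem : u₂ ∈ center G := hZ.ge (subset_closure (by simp))
  have hdisj' : zpowers u₁ ⊓ zpowers u₂ = ⊥ :=
    eq_bot_mono (inf_le_inf_left _ (zpowers_le.mpr (subset_closure (by simp)))) hdisj
  exact hasIndependentPair_center_of_mem hu₁_mem hu₂_mem fun _ _ =>
    Commute.eq_zero_of_isOfFinOrder_zpow_mul_zpow (mem_center_iff.mp hu₂_mem u₁) hdisj' hu₁ hu₂

end

theorem familyG7_G8_G9_pairwise_not_iso (p : ℕ) (hp : p.Prime)
    (G₇ : Type*) [Group G₇] (G₈ : Type*) [Group G₈] (G₉ : Type*) [Group G₉]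
    (h₇ : ∃ m₁ m₂ m₃, 1 ≤ m₁ ∧ 1 ≤ m₂ ∧ 1 ≤ m₃ ∧ InFamilyG7 p m₁ m₂ m₃ G₇)
    (h₈ : ∃ m₁ m₂, 1 ≤ m₁ ∧ 1 ≤ m₂ ∧ InFamilyG8 p m₁ m₂ G₈)
    (h₉ : ∃ m₁, 1 ≤ m₁ ∧ InFamilyG9 p m₁ G₉) :
    IsEmpty (G₇ ≃* G₈) ∧ IsEmpty (G₇ ≃* G₉) ∧ IsEmpty (G₈ ≃* G₉) := by
  obtain ⟨_, _, _, -, -, -, h₇⟩ := h₇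
  obtain ⟨_, _, -, -, h₈⟩ := h₈
  obtain ⟨_, -, h₉⟩ := h₉
  have torsion₇ := h₇.isMulTorsion_center hp.pos
  have pair₉ := h₉.hasIndependentPair_center
  refine ⟨⟨fun e => ?_⟩, ⟨fun e => ?_⟩, ⟨fun e => ?_⟩⟩
  · exact h₈.not_isMulTorsion_center
      (torsion₇.of_surjective (f := (centerCongr e).toMonoidHom) (centerCongr e).surjective)
  · exact pair₉.not_isMulTorsion
      (torsion₇.of_surjective (f := (centerCongr e).toMonoidHom) (centerCongr e).surjective)
  · exact h₈.not_hasIndependentPair_center hp.pos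
      (pair₉.of_injective (f := (centerCongr e.symm).toMonoidHom) (centerCongr e.symm).injective)
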